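/- Let $V_2 = p^2 I_{k^2} - p^4 J_{k^2}$, $V = pI_k - p^2 J_k$, and $\Omega_2 = V_2 - p^2 (V\otimes J_k) - p^2 (J_k\otimes V)$ with $p=1/k$. Then $\Omega_2^2 = p^2\Omega_2$. -/
import Mathlib


open Matrix
open scoped Kronecker

theorem Omega2_sq_eq_p_sq_smul (k : ℕ) (hk : 1 ≤ k) (p : ℝ) (hp : p = 1 / (k : ℝ))
    (V : Matrix (Fin k) (Fin k) ℝ)
    (hV : V = p • (1 : Matrix (Fin k) (Fin k) ℝ) - p ^ 2 • (Matrix.of fun _ _ => (1 : ℝ)))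
    (V₂ : Matrix (Fin k × Fin k) (Fin k × Fin k) ℝ)
    (hV₂ : V₂ = p ^ 2 • (1 : Matrix (Fin k × Fin k) (Fin k × Fin k) ℝ) -
      p ^ 4 • (Matrix.of fun _ _ => (1 : ℝ)))
    (J : Matrix (Fin k) (Fin k) ℝ) (hJ : J = Matrix.of fun _ _ => (1 : ℝ))
    (Ω₂ : Matrix (Fin k × Fin k) (Fin k × Fin k) ℝ)
    (hΩ₂ : Ω₂ = V₂ - p ^ 2 • (V ⊗ₖ J) - p ^ 2 • (J ⊗ₖ V)) :
    Ω₂ * Ω₂ = p ^ 2 • Ω₂ := by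
  have hk0 : (k : ℝ) ≠ 0 := Nat.cast_ne_zero.mpr (by omega)
  subst hp hV hJ hV₂ hΩ₂
  have h1 : (1 : Matrix (Fin k × Fin k) (Fin k × Fin k) ℝ)
      = (1 : Matrix (Fin k) (Fin k) ℝ) ⊗ₖ (1 : Matrix (Fin k) (Fin k) ℝ) :=
    (Matrix.one_kronecker_one).symm
  have hJprod : (Matrix.of fun _ _ => (1 : ℝ) : Matrix (Fin k × Fin k) (Fin k × Fin k) ℝ)
      = (Matrix.of fun _ _ => (1 : ℝ) : Matrix (Fin k) (Fin k) ℝ) ⊗ₖ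
        (Matrix.of fun _ _ => (1 : ℝ) : Matrix (Fin k) (Fin k) ℝ) := by
    ext ⟨a, b⟩ ⟨c, d⟩
    simp [Matrix.kroneckerMap_apply]
  have hJJ : (Matrix.of fun _ _ => (1 : ℝ) : Matrix (Fin k) (Fin k) ℝ) *
      (Matrix.of fun _ _ => (1 : ℝ)) = (k : ℝ) • (Matrix.of fun _ _ => (1 : ℝ)) := by
    ext i j
    simp [Matrix.mul_apply]
  have hsubL : ∀ A B C : Matrix (Fin k) (Fin k) ℝ, (A - B) ⊗ₖ C = A ⊗ₖ C - B ⊗ₖ C := by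
    intro A B C; ext ⟨a, b⟩ ⟨c, d⟩; simp [Matrix.kroneckerMap_apply, sub_mul]
  have hsubR : ∀ A B C : Matrix (Fin k) (Fin k) ℝ, A ⊗ₖ (B - C) = A ⊗ₖ B - A ⊗ₖ C := by
    intro A B C; ext ⟨a, b⟩ ⟨c, d⟩; simp [Matrix.kroneckerMap_apply, mul_sub]
  rw [h1, hJprod]
  simp only [hsubL, hsubR, Matrix.smul_kronecker,
    Matrix.kronecker_smul, smul_sub, sub_mul, mul_sub, smul_mul_assoc, mul_smul_comm,
    ← Matrix.mul_kronecker_mul, hJJ, Matrix.one_mul, Matrix.mul_one, smul_smul]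
  match_scalars <;> field_simp <;> ring
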